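/- For any finite Gibbs system on {−1,1}^N with two-body Hamiltonian, the function t ↦ E[log Tr exp(√t Σ a_{ij} J_{ij} σ_iσ_j + √(1−t) Σ b_{ij} J'_{ij} σ_iσ_j)] is differentiable on (0,1), with derivative given by (1/2) E[Σ a_{ij}²(1 − ⟨σ_iσ_j⟩²) − Σ b_{ij}²(1 − ⟨σ_iσ_j⟩²)] after Gaussian integration by parts, when J_{ij}, J'_{ij} are independent standard Gaussians. -/

import Mathlib

open MeasureTheory ProbabilityTheory

/-- The Ising spin value of a configuration at a site. -/
noncomputable def spin {N : ℕ} (σ : Fin N → Bool) (i : Fin N) : ℝ :=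
  if σ i then 1 else -1

/-- The Guerra–Toninelli interpolating exponent
`√t Σ a_{ij} J_{ij} σ_i σ_j + √(1-t) Σ b_{ij} J'_{ij} σ_i σ_j`. -/
noncomputable def gtInterpH {N : ℕ} (a b : Fin N → Fin N → ℝ) (t : ℝ)
    (J : (Fin N × Fin N → ℝ) × (Fin N × Fin N → ℝ)) (σ : Fin N → Bool) : ℝ :=
  Real.sqrt t * ∑ p : Fin N × Fin N, a p.1 p.2 * J.1 p * spin σ p.1 * spin σ p.2
    + Real.sqrt (1 - t) * ∑ p : Fin N × Fin N, b p.1 p.2 * J.2 p * spin σ p.1 * spin σ p.2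

/-- Gibbs average `⟨σ_i σ_j⟩` of the interpolating system at parameter `t`, disorder `J`. -/
noncomputable def gtInterpGibbs {N : ℕ} (a b : Fin N → Fin N → ℝ) (t : ℝ)
    (J : (Fin N × Fin N → ℝ) × (Fin N × Fin N → ℝ)) (i j : Fin N) : ℝ :=
  (∑ σ : Fin N → Bool, spin σ i * spin σ j * Real.exp (gtInterpH a b t J σ)) /
  (∑ σ : Fin N → Bool, Real.exp (gtInterpH a b t J σ))

/-- The disorder measure: two independent families of i.i.d. standard Gaussians. -/
noncomputable def disorderMeasure (N : ℕ) :
    Measure ((Fin N × Fin N → ℝ) × (Fin N × Fin N → ℝ)) :=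
  (Measure.pi fun _ : Fin N × Fin N => gaussianReal 0 1).prod
    (Measure.pi fun _ : Fin N × Fin N => gaussianReal 0 1)

/-!
By dominated convergence, the derivative of `s ↦ E log Z(s)` is `E ⟨∂ₛH⟩`. Indexing the two
coupling families `J`, `J'` jointly by `k`, the Hamiltonian is linear in the couplings,
`H = ∑ₖ θₖ(s) Jₖ wₖ(σ)`, so `E ⟨∂ₛH⟩ = ∑ₖ θₖ'(s) E[Jₖ ⟨wₖ⟩]`. Gaussian integration by parts
(Stein's lemma) in the single coordinate `Jₖ` turns `E[Jₖ ⟨wₖ⟩]` into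
`E[∂⟨wₖ⟩/∂Jₖ] = θₖ E[⟨wₖ²⟩ - ⟨wₖ⟩²]`. For spin products `wₖ² = 1`, and `θₖ' θₖ` is `a²/2` for
`θₖ = √s a` and `-b²/2` for `θₖ = √(1 - s) b`.
-/

open Real Function Set Filter
open scoped NNReal Topology

namespace ProbabilityTheory

lemma integrable_gaussianReal_iff {μ : ℝ} {v : ℝ≥0} (hv : v ≠ 0) {f : ℝ → ℝ} :
    Integrable f (gaussianReal μ v) ↔ Integrable fun x => gaussianPDFReal μ v x * f x := by
  rw [gaussianReal_of_var_ne_zero _ hv, integrable_withDensity_iff_integrable_smul'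
    (measurable_gaussianPDF _ _) (ae_of_all _ fun _ => gaussianPDF_lt_top)]
  simp [toReal_gaussianPDF]

lemma hasDerivAt_gaussianPDFReal (μ : ℝ) (v : ℝ≥0) (x : ℝ) :
    HasDerivAt (gaussianPDFReal μ v) (-((x - μ) / v) * gaussianPDFReal μ v x) x := by
  have h : HasDerivAt (fun x => (x - μ) ^ 2) (2 * (x - μ)) x := by
    simpa using ((hasDerivAt_id' x).sub_const μ).fun_pow 2
  refine ((h.fun_neg.div_const (2 * (v : ℝ))).exp.const_mul (√(2 * π * v))⁻¹).congr_deriv ?_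
  rw [gaussianPDFReal]
  ring

theorem integral_sub_mul_eq_integral_deriv_gaussianReal {μ : ℝ} {v : ℝ≥0} {g g' : ℝ → ℝ}
    {C C' : ℝ} (hg : ∀ x, HasDerivAt g (g' x) x) (hgC : ∀ x, |g x| ≤ C)
    (hg'C : ∀ x, |g' x| ≤ C') :
    ∫ x, (x - μ) * g x ∂gaussianReal μ v = v * ∫ x, g' x ∂gaussianReal μ v := by
  rcases eq_or_ne v 0 with rfl | hv
  · simp [gaussianReal_zero_var]
  set φ := gaussianPDFReal μ v
  have hg_meas : AEStronglyMeasurable g :=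
    (continuous_iff_continuousAt.2 fun x => (hg x).continuousAt).aestronglyMeasurable
  have hg'_meas : AEStronglyMeasurable g' := by
    rw [show g' = deriv g from funext fun x => (hg x).deriv.symm]
    exact (stronglyMeasurable_deriv g).aestronglyMeasurable
  have hφ : Integrable φ := integrable_gaussianPDFReal μ v
  have hφ' : Integrable fun x => -((x - μ) / v) * φ x :=
    ((integrable_gaussianReal_iff hv).1 (((memLp_id_gaussianReal (μ := μ) 1).integrable
      le_rfl).sub (integrable_const μ))).div_const (-(v : ℝ)) |>.congr
      (ae_of_all _ fun x => by simp only [Pi.sub_apply, id]; ring)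
  have hIBP := integral_mul_deriv_eq_deriv_mul_of_integrable (u := g) (v := φ)
    (fun x _ => hg x) (fun x _ => hasDerivAt_gaussianPDFReal μ v x)
    (hφ'.bdd_mul hg_meas (ae_of_all _ hgC)) (hφ.bdd_mul hg'_meas (ae_of_all _ hg'C))
    (hφ.bdd_mul hg_meas (ae_of_all _ hgC))
  have hv' : (v : ℝ) ≠ 0 := NNReal.coe_ne_zero.2 hv
  simp only [integral_gaussianReal_eq_integral_smul hv, smul_eq_mul]
  calc ∫ x, φ x * ((x - μ) * g x) = -v * ∫ x, g x * (-((x - μ) / v) * φ x) := by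
        rw [← integral_const_mul]; congr 1; funext x; field_simp
    _ = v * ∫ x, φ x * g' x := by
        rw [hIBP, neg_mul_neg]; congr 1; congr 1; funext x; ring

end ProbabilityTheory

namespace MeasureTheory

variable {ι : Type*} [Fintype ι] [DecidableEq ι] {X : ι → Type*} [∀ i, MeasurableSpace (X i)]
  (μ : ∀ i, Measure (X i)) [∀ i, IsProbabilityMeasure (μ i)]

theorem measurePreserving_update (i : ι) :
    MeasurePreserving (fun p : (∀ j, X j) × X i => update p.1 i p.2)
      ((Measure.pi μ).prod (μ i)) (Measure.pi μ) where
  measurable := measurable_update'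
  map_eq := by
    refine (Measure.pi_eq fun s hs => ?_).symm
    have hpre : (fun p : (∀ j, X j) × X i => update p.1 i p.2) ⁻¹' univ.pi s
        = univ.pi (update s i univ) ×ˢ s i := by
      ext ⟨J, x⟩
      simp only [mem_preimage, mem_univ_pi, mem_prod]
      constructor
      · intro h
        refine ⟨fun j => ?_, by simpa using h i⟩
        by_cases hj : j = i
        · subst hj; simp
        · simpa [hj] using h j
      · rintro ⟨h, hx⟩ j
        by_cases hj : j = i
        · subst hj; simpa using hx
        · simpa [hj] using h j
    rw [Measure.map_apply measurable_update' (MeasurableSet.univ_pi hs), hpre,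
      Measure.prod_prod, Measure.pi_pi, ← Finset.mul_prod_erase _ _ (Finset.mem_univ i),
      ← Finset.mul_prod_erase _ (fun j => μ j (s j)) (Finset.mem_univ i)]
    simp only [update_self, measure_univ, one_mul]
    rw [mul_comm]
    congr 1
    exact Finset.prod_congr rfl fun j hj => by rw [update_of_ne (Finset.ne_of_mem_erase hj)]

theorem integral_eq_integral_integral_update {E : Type*} [NormedAddCommGroup E] [NormedSpace ℝ E]
    (i : ι) {f : (∀ j, X j) → E} (hf : Integrable f (Measure.pi μ)) :
    ∫ J, f J ∂Measure.pi μ = ∫ J, ∫ x, f (update J i x) ∂μ i ∂Measure.pi μ := by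
  have h := measurePreserving_update μ i
  have hf' : AEStronglyMeasurable f (((Measure.pi μ).prod (μ i)).map fun p => update p.1 i p.2) :=
    by rw [h.map_eq]; exact hf.aestronglyMeasurable
  conv_lhs => rw [← h.map_eq, integral_map h.measurable.aemeasurable hf']
  exact integral_prod _ ((h.integrable_comp hf.aestronglyMeasurable).2 hf)

end MeasureTheory

namespace ProbabilityTheory

variable {ι : Type*} [Fintype ι] [DecidableEq ι] {ν : ι → Measure ℝ}
  [∀ i, IsProbabilityMeasure (ν i)]

theorem integral_sub_mul_eq_integral_partialDeriv_pi {i : ι} {m : ℝ} {v : ℝ≥0}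
    (hνi : ν i = gaussianReal m v) {G G' : (ι → ℝ) → ℝ} {C C' : ℝ}
    (hG : ∀ J, HasDerivAt (fun y => G (update J i y)) (G' J) (J i))
    (hGm : AEStronglyMeasurable G (Measure.pi ν)) (hG'm : AEStronglyMeasurable G' (Measure.pi ν))
    (hGC : ∀ J, |G J| ≤ C) (hG'C : ∀ J, |G' J| ≤ C') :
    ∫ J, (J i - m) * G J ∂Measure.pi ν = v * ∫ J, G' J ∂Measure.pi ν := by
  have hid : Integrable id (ν i) := hνi ▸ (memLp_id_gaussianReal 1).integrable le_rfl
  have hint : Integrable (fun J : ι → ℝ => (J i - m) * G J) (Measure.pi ν) :=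
    ((integrable_eval hid).sub (integrable_const m)).mul_bdd hGm (ae_of_all _ hGC)
  rw [integral_eq_integral_integral_update ν i hint,
    integral_eq_integral_integral_update ν i (Integrable.of_bound hG'm C' (ae_of_all _ hG'C)),
    ← integral_const_mul]
  congr 1
  funext J
  simp only [update_self, hνi]
  refine integral_sub_mul_eq_integral_deriv_gaussianReal (fun x => ?_) (fun x => hGC _)
    (fun x => hG'C _)
  simpa using hG (update J i x)

end ProbabilityTheory

section Gibbs

variable {Ω : Type*} [Fintype Ω]

noncomputable def gibbsAverage (H f : Ω → ℝ) : ℝ :=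
  (∑ σ, f σ * exp (H σ)) / ∑ σ, exp (H σ)

noncomputable def gibbsCovariance (H f g : Ω → ℝ) : ℝ :=
  gibbsAverage H (fun σ => f σ * g σ) - gibbsAverage H f * gibbsAverage H g

noncomputable def logPartition (H : Ω → ℝ) : ℝ :=
  log (∑ σ, exp (H σ))

lemma gibbsAverage_const_mul (H f : Ω → ℝ) (c : ℝ) :
    gibbsAverage H (fun σ => c * f σ) = c * gibbsAverage H f := by
  simp only [gibbsAverage, mul_assoc, ← Finset.mul_sum, mul_div_assoc]

lemma gibbsAverage_sum {κ : Type*} (s : Finset κ) (H : Ω → ℝ) (f : κ → Ω → ℝ) :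
    gibbsAverage H (fun σ => ∑ k ∈ s, f k σ) = ∑ k ∈ s, gibbsAverage H (f k) := by
  simp only [gibbsAverage, Finset.sum_mul, ← Finset.sum_div]
  rw [Finset.sum_comm]

lemma gibbsCovariance_const_mul_right (H f g : Ω → ℝ) (c : ℝ) :
    gibbsCovariance H f (fun σ => c * g σ) = c * gibbsCovariance H f g := by
  simp only [gibbsCovariance, mul_left_comm (f _) c, gibbsAverage_const_mul]
  ring

variable [Nonempty Ω]

lemma sum_exp_pos (H : Ω → ℝ) : 0 < ∑ σ, exp (H σ) :=
  Finset.sum_pos (fun _ _ => exp_pos _) Finset.univ_nonempty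

lemma gibbsAverage_const (H : Ω → ℝ) (c : ℝ) : gibbsAverage H (fun _ => c) = c := by
  rw [gibbsAverage, ← Finset.mul_sum, mul_div_cancel_right₀ _ (sum_exp_pos H).ne']

lemma abs_gibbsAverage_le {H f : Ω → ℝ} {C : ℝ} (hf : ∀ σ, |f σ| ≤ C) :
    |gibbsAverage H f| ≤ C := by
  rw [gibbsAverage, abs_div, abs_of_pos (sum_exp_pos H), div_le_iff₀ (sum_exp_pos H),
    Finset.mul_sum]
  refine (Finset.abs_sum_le_sum_abs _ _).trans (Finset.sum_le_sum fun σ _ => ?_)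
  rw [abs_mul, abs_of_pos (exp_pos _)]
  exact mul_le_mul_of_nonneg_right (hf σ) (exp_pos _).le

lemma abs_gibbsCovariance_le {H f g : Ω → ℝ} {A B : ℝ} (hf : ∀ σ, |f σ| ≤ A)
    (hg : ∀ σ, |g σ| ≤ B) : |gibbsCovariance H f g| ≤ 2 * (A * B) := by
  obtain ⟨σ₀⟩ := ‹Nonempty Ω›
  have hA : 0 ≤ A := (abs_nonneg _).trans (hf σ₀)
  have hfg : ∀ σ, |f σ * g σ| ≤ A * B := fun σ => by
    rw [abs_mul]; exact mul_le_mul (hf σ) (hg σ) (abs_nonneg _) hA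
  calc |gibbsCovariance H f g|
      ≤ |gibbsAverage H fun σ => f σ * g σ| + |gibbsAverage H f| * |gibbsAverage H g| := by
        rw [gibbsCovariance, ← abs_mul]; exact abs_sub _ _
    _ ≤ A * B + A * B := add_le_add (abs_gibbsAverage_le hfg)
        (mul_le_mul (abs_gibbsAverage_le hf) (abs_gibbsAverage_le hg) (abs_nonneg _) hA)
    _ = 2 * (A * B) := by ring

lemma abs_logPartition_le {H : Ω → ℝ} {M : ℝ} (hH : ∀ σ, |H σ| ≤ M) :
    |logPartition H| ≤ log (Fintype.card Ω) + M := by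
  obtain ⟨σ₀⟩ := ‹Nonempty Ω›
  have hcard : (1 : ℝ) ≤ Fintype.card Ω := by exact_mod_cast Fintype.card_pos
  have hlower : exp (-M) ≤ ∑ σ, exp (H σ) :=
    (exp_le_exp.2 (neg_le_of_abs_le (hH σ₀))).trans
      (Finset.single_le_sum (fun σ _ => (exp_pos (H σ)).le) (Finset.mem_univ σ₀))
  have hupper : ∑ σ, exp (H σ) ≤ Fintype.card Ω * exp M := by
    calc ∑ σ, exp (H σ) ≤ ∑ _σ : Ω, exp M :=
          Finset.sum_le_sum fun σ _ => exp_le_exp.2 (le_of_abs_le (hH σ))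
      _ = Fintype.card Ω * exp M := by simp
  have h1 := log_le_log (exp_pos _) hlower
  have h2 := log_le_log (sum_exp_pos H) hupper
  rw [log_exp] at h1
  rw [log_mul (by positivity) (exp_pos M).ne', log_exp] at h2
  have := log_nonneg hcard
  rw [logPartition, abs_le]
  constructor <;> linarith

lemma hasDerivAt_logPartition {H : ℝ → Ω → ℝ} {H' : Ω → ℝ} {s : ℝ}
    (hH : ∀ σ, HasDerivAt (H · σ) (H' σ) s) :
    HasDerivAt (fun s => logPartition (H s)) (gibbsAverage (H s) H') s := by
  have hZ := HasDerivAt.fun_sum fun σ (_ : σ ∈ Finset.univ) => (hH σ).exp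
  refine (hZ.log (sum_exp_pos (H s)).ne').congr_deriv ?_
  unfold gibbsAverage
  congr 1
  exact Finset.sum_congr rfl fun _ _ => mul_comm _ _

lemma hasDerivAt_gibbsAverage {H : ℝ → Ω → ℝ} {H' : Ω → ℝ} {s : ℝ}
    (hH : ∀ σ, HasDerivAt (H · σ) (H' σ) s) (f : Ω → ℝ) :
    HasDerivAt (fun s => gibbsAverage (H s) f) (gibbsCovariance (H s) f H') s := by
  have hN := HasDerivAt.fun_sum fun σ (_ : σ ∈ Finset.univ) => ((hH σ).exp.const_mul (f σ))
  have hZ := HasDerivAt.fun_sum fun σ (_ : σ ∈ Finset.univ) => (hH σ).exp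
  refine (hN.fun_div hZ (sum_exp_pos (H s)).ne').congr_deriv ?_
  have e1 : ∑ σ, f σ * (exp (H s σ) * H' σ) = ∑ σ, f σ * H' σ * exp (H s σ) :=
    Finset.sum_congr rfl fun _ _ => by ring
  have e2 : ∑ σ, exp (H s σ) * H' σ = ∑ σ, H' σ * exp (H s σ) :=
    Finset.sum_congr rfl fun _ _ => mul_comm _ _
  have hZ0 := (sum_exp_pos (H s)).ne'
  rw [e1, e2, gibbsCovariance, gibbsAverage, gibbsAverage, gibbsAverage]
  field_simp

lemma continuous_gibbsAverage {X : Type*} [TopologicalSpace X] {H f : X → Ω → ℝ}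
    (hH : ∀ σ, Continuous (H · σ)) (hf : ∀ σ, Continuous (f · σ)) :
    Continuous fun x => gibbsAverage (H x) (f x) :=
  (continuous_finsetSum _ fun σ _ => (hf σ).mul (hH σ).rexp).div
    (continuous_finsetSum _ fun σ _ => (hH σ).rexp) fun x => (sum_exp_pos (H x)).ne'

lemma continuous_logPartition {X : Type*} [TopologicalSpace X] {H : X → Ω → ℝ}
    (hH : ∀ σ, Continuous (H · σ)) : Continuous fun x => logPartition (H x) :=
  (continuous_finsetSum _ fun σ _ => (hH σ).rexp).log fun x => (sum_exp_pos (H x)).ne'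

end Gibbs

section LinearHamiltonian

variable {κ Ω : Type*} [Fintype κ]

noncomputable def linearHamiltonian (θ : κ → ℝ) (w : κ → Ω → ℝ) (K : κ → ℝ) (σ : Ω) : ℝ :=
  ∑ k, θ k * K k * w k σ

lemma continuous_linearHamiltonian (θ : κ → ℝ) (w : κ → Ω → ℝ) (σ : Ω) :
    Continuous fun K => linearHamiltonian θ w K σ := by
  unfold linearHamiltonian; fun_prop

lemma abs_linearHamiltonian_le {θ : κ → ℝ} {w : κ → Ω → ℝ} {W : ℝ} (hw : ∀ k σ, |w k σ| ≤ W)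
    (K : κ → ℝ) (σ : Ω) : |linearHamiltonian θ w K σ| ≤ ∑ k, |θ k| * |K k| * W := by
  refine (Finset.abs_sum_le_sum_abs _ _).trans (Finset.sum_le_sum fun k _ => ?_)
  rw [abs_mul, abs_mul]
  exact mul_le_mul_of_nonneg_left (hw k σ) (by positivity)

lemma gibbsAverage_linearHamiltonian [Fintype Ω] (H : Ω → ℝ) (θ : κ → ℝ) (w : κ → Ω → ℝ)
    (K : κ → ℝ) :
    gibbsAverage H (linearHamiltonian θ w K) = ∑ k, θ k * K k * gibbsAverage H (w k) := by
  change gibbsAverage H (fun σ => ∑ k, θ k * K k * w k σ) = _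
  simp only [gibbsAverage_sum, gibbsAverage_const_mul]

lemma hasDerivAt_linearHamiltonian_update [DecidableEq κ] (θ : κ → ℝ) (w : κ → Ω → ℝ)
    (K : κ → ℝ) (k : κ) (σ : Ω) (x : ℝ) :
    HasDerivAt (fun y => linearHamiltonian θ w (update K k y) σ) (θ k * w k σ) x := by
  have h : ∀ y, linearHamiltonian θ w (update K k y) σ
      = θ k * w k σ * y + ∑ j ∈ Finset.univ.erase k, θ j * K j * w j σ := fun y => by
    rw [linearHamiltonian, ← Finset.add_sum_erase _ _ (Finset.mem_univ k), update_self]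
    congr 1
    · ring
    · exact Finset.sum_congr rfl fun j hj => by rw [update_of_ne (Finset.ne_of_mem_erase hj)]
  simp only [h]
  simpa using ((hasDerivAt_id' x).const_mul (θ k * w k σ)).add_const
    (∑ j ∈ Finset.univ.erase k, θ j * K j * w j σ)

lemma hasDerivAt_linearHamiltonian_param {θ θ' : ℝ → κ → ℝ} {s : ℝ}
    (hθ : ∀ k, HasDerivAt (θ · k) (θ' s k) s) (w : κ → Ω → ℝ) (K : κ → ℝ) (σ : Ω) :
    HasDerivAt (fun s => linearHamiltonian (θ s) w K σ) (linearHamiltonian (θ' s) w K σ) s :=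
  HasDerivAt.fun_sum fun k _ => ((hθ k).mul_const (K k)).mul_const (w k σ)

end LinearHamiltonian

section GaussianDisorder

variable {κ Ω : Type*} [Fintype κ] [Fintype Ω] [Nonempty Ω]

lemma integrable_eval_pi_gaussianReal (k : κ) :
    Integrable (fun K : κ → ℝ => K k) (Measure.pi fun _ => gaussianReal 0 1) :=
  integrable_eval ((memLp_id_gaussianReal 1).integrable le_rfl)

lemma continuous_gibbsAverage_linearHamiltonian (θ : κ → ℝ) (w : κ → Ω → ℝ) (f : Ω → ℝ) :
    Continuous fun K => gibbsAverage (linearHamiltonian θ w K) f :=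
  continuous_gibbsAverage (f := fun _ => f) (continuous_linearHamiltonian θ w)
    fun _ => continuous_const

lemma continuous_gibbsCovariance_linearHamiltonian (θ : κ → ℝ) (w : κ → Ω → ℝ) (f g : Ω → ℝ) :
    Continuous fun K => gibbsCovariance (linearHamiltonian θ w K) f g :=
  (continuous_gibbsAverage_linearHamiltonian θ w _).sub
    ((continuous_gibbsAverage_linearHamiltonian θ w f).mul
      (continuous_gibbsAverage_linearHamiltonian θ w g))

theorem integral_mul_gibbsAverage_linearHamiltonian (θ : κ → ℝ) (w : κ → Ω → ℝ)
    (f : Ω → ℝ) (k : κ) :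
    ∫ K, K k * gibbsAverage (linearHamiltonian θ w K) f ∂Measure.pi (fun _ => gaussianReal 0 1)
      = θ k * ∫ K, gibbsCovariance (linearHamiltonian θ w K) f (w k)
          ∂Measure.pi (fun _ => gaussianReal 0 1) := by
  classical
  obtain ⟨F, hF⟩ := Finite.exists_le fun σ => |f σ|
  obtain ⟨W, hW⟩ := Finite.exists_le fun σ => |w k σ|
  have h := integral_sub_mul_eq_integral_partialDeriv_pi (ν := fun _ => gaussianReal 0 1)
    (i := k) rfl (G' := fun K => θ k * gibbsCovariance (linearHamiltonian θ w K) f (w k))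
    (fun K => ?_) (continuous_gibbsAverage_linearHamiltonian θ w f).aestronglyMeasurable
    (continuous_const.mul
      (continuous_gibbsCovariance_linearHamiltonian θ w f (w k))).aestronglyMeasurable
    (fun K => abs_gibbsAverage_le hF)
    (fun K => (abs_mul _ _).trans_le
      (mul_le_mul_of_nonneg_left (abs_gibbsCovariance_le hF hW) (abs_nonneg _)))
  · simpa [integral_const_mul] using h
  · have := hasDerivAt_gibbsAverage
      (fun σ => hasDerivAt_linearHamiltonian_update θ w K k σ (K k)) f
    rwa [update_eq_self, gibbsCovariance_const_mul_right] at this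

theorem integral_gibbsAverage_linearHamiltonian (θ θ' : κ → ℝ) (w : κ → Ω → ℝ) :
    ∫ K, gibbsAverage (linearHamiltonian θ w K) (linearHamiltonian θ' w K)
        ∂Measure.pi (fun _ => gaussianReal 0 1)
      = ∫ K, ∑ k, θ' k * θ k * gibbsCovariance (linearHamiltonian θ w K) (w k) (w k)
          ∂Measure.pi (fun _ => gaussianReal 0 1) := by
  obtain ⟨W, hW⟩ := Finite.exists_le fun p : κ × Ω => |w p.1 p.2|
  have hJ : ∀ k, Integrable (fun K => θ' k * (K k * gibbsAverage (linearHamiltonian θ w K) (w k)))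
      (Measure.pi fun _ => gaussianReal 0 1) := fun k =>
    ((integrable_eval_pi_gaussianReal k).mul_bdd
      (continuous_gibbsAverage_linearHamiltonian θ w (w k)).aestronglyMeasurable
      (ae_of_all _ fun K => abs_gibbsAverage_le fun σ => hW (k, σ))).const_mul _
  have hcov : ∀ k, Integrable
      (fun K => θ' k * θ k * gibbsCovariance (linearHamiltonian θ w K) (w k) (w k))
      (Measure.pi fun _ => gaussianReal 0 1) := fun k =>
    (Integrable.of_bound (continuous_gibbsCovariance_linearHamiltonian θ w _ _).aestronglyMeasurable
      _ (ae_of_all _ fun K => abs_gibbsCovariance_le (hW ⟨k, ·⟩) (hW ⟨k, ·⟩))).const_mul _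
  simp only [gibbsAverage_linearHamiltonian, mul_assoc]
  rw [integral_finsetSum _ fun k _ => hJ k, integral_finsetSum _ fun k _ => by
    simpa only [mul_assoc] using hcov k]
  refine Finset.sum_congr rfl fun k _ => ?_
  rw [integral_const_mul, integral_const_mul, integral_const_mul,
    integral_mul_gibbsAverage_linearHamiltonian]

lemma integrable_logPartition_linearHamiltonian (θ : κ → ℝ) (w : κ → Ω → ℝ) :
    Integrable (fun K => logPartition (linearHamiltonian θ w K))
      (Measure.pi fun _ => gaussianReal 0 1) := by
  obtain ⟨W, hW⟩ := Finite.exists_le fun p : κ × Ω => |w p.1 p.2|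
  exact ((integrable_const _).add (integrable_finsetSum _ fun k _ =>
    ((integrable_eval_pi_gaussianReal k).abs.const_mul |θ k|).mul_const W)).mono'
    (continuous_logPartition (continuous_linearHamiltonian θ w)).aestronglyMeasurable
    (ae_of_all _ fun K => abs_logPartition_le (abs_linearHamiltonian_le (fun k σ => hW (k, σ)) K))

theorem hasDerivAt_integral_logPartition_linearHamiltonian {θ θ' : ℝ → κ → ℝ} {t : ℝ}
    {U : Set ℝ} {C : κ → ℝ} (w : κ → Ω → ℝ) (hU : U ∈ 𝓝 t)
    (hθ : ∀ s ∈ U, ∀ k, HasDerivAt (θ · k) (θ' s k) s) (hθ'C : ∀ s ∈ U, ∀ k, |θ' s k| ≤ C k) :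
    HasDerivAt
      (fun s => ∫ K, logPartition (linearHamiltonian (θ s) w K)
        ∂Measure.pi (fun _ => gaussianReal 0 1))
      (∫ K, ∑ k, θ' t k * θ t k * gibbsCovariance (linearHamiltonian (θ t) w K) (w k) (w k)
        ∂Measure.pi (fun _ => gaussianReal 0 1)) t := by
  obtain ⟨W, hW⟩ := Finite.exists_le fun p : κ × Ω => |w p.1 p.2|
  have hH : ∀ θ, ∀ σ, Continuous fun K => linearHamiltonian θ w K σ :=
    fun θ => continuous_linearHamiltonian θ w
  have hbound : ∀ K, ∀ s ∈ U, ‖gibbsAverage (linearHamiltonian (θ s) w K)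
      (linearHamiltonian (θ' s) w K)‖ ≤ ∑ k, C k * |K k| * W := fun K s hs =>
    (abs_gibbsAverage_le (abs_linearHamiltonian_le (fun k σ => hW (k, σ)) K)).trans
      (Finset.sum_le_sum fun k _ => by
        gcongr
        exacts [(abs_nonneg _).trans (hW (k, Classical.arbitrary Ω)), hθ'C s hs k])
  obtain ⟨-, h⟩ := hasDerivAt_integral_of_dominated_loc_of_deriv_le hU
    (Eventually.of_forall fun s => (continuous_logPartition (hH _)).aestronglyMeasurable)
    (integrable_logPartition_linearHamiltonian (θ t) w)
    (continuous_gibbsAverage (hH _) (hH _)).aestronglyMeasurable (ae_of_all _ hbound)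
    (integrable_finsetSum _ fun k _ =>
      ((integrable_eval_pi_gaussianReal k).abs.const_mul (C k)).mul_const W)
    (ae_of_all _ fun K s hs =>
      hasDerivAt_logPartition fun σ => hasDerivAt_linearHamiltonian_param (hθ s hs) w K σ)
  rwa [integral_gibbsAverage_linearHamiltonian] at h

end GaussianDisorder

section GuerraToninelli

variable {N : ℕ}

noncomputable def spinPair (p : Fin N × Fin N) (σ : Fin N → Bool) : ℝ :=
  spin σ p.1 * spin σ p.2

lemma spinPair_mul_self (p : Fin N × Fin N) (σ : Fin N → Bool) :
    spinPair p σ * spinPair p σ = 1 := by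
  unfold spinPair spin; split_ifs <;> norm_num

lemma gibbsCovariance_spinPair_self (H : (Fin N → Bool) → ℝ) (p : Fin N × Fin N) :
    gibbsCovariance H (spinPair p) (spinPair p) = 1 - gibbsAverage H (spinPair p) ^ 2 := by
  simp only [gibbsCovariance, spinPair_mul_self, gibbsAverage_const, sq]

noncomputable def gtCoeff (a b : Fin N → Fin N → ℝ) (s : ℝ) :
    (Fin N × Fin N) ⊕ (Fin N × Fin N) → ℝ :=
  Sum.elim (fun p => √s * a p.1 p.2) (fun p => √(1 - s) * b p.1 p.2)

noncomputable def gtCoeffDeriv (a b : Fin N → Fin N → ℝ) (s : ℝ) :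
    (Fin N × Fin N) ⊕ (Fin N × Fin N) → ℝ :=
  Sum.elim (fun p => a p.1 p.2 / (2 * √s)) (fun p => -(b p.1 p.2 / (2 * √(1 - s))))

lemma gtInterpH_sumPiEquivProdPi (a b : Fin N → Fin N → ℝ) (s : ℝ)
    (K : (Fin N × Fin N) ⊕ (Fin N × Fin N) → ℝ) :
    gtInterpH a b s (MeasurableEquiv.sumPiEquivProdPi _ K)
      = linearHamiltonian (gtCoeff a b s) (Sum.elim spinPair spinPair) K := by
  funext σ
  simp only [gtInterpH, linearHamiltonian, Fintype.sum_sum_type, gtCoeff, Sum.elim_inl,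
    Sum.elim_inr, Finset.mul_sum, spinPair, MeasurableEquiv.sumPiEquivProdPi,
    MeasurableEquiv.coe_mk, Equiv.sumPiEquivProdPi_apply]
  congr 1 <;> exact Finset.sum_congr rfl fun p _ => by ring

lemma gtInterpGibbs_eq_gibbsAverage (a b : Fin N → Fin N → ℝ) (t : ℝ)
    (J : (Fin N × Fin N → ℝ) × (Fin N × Fin N → ℝ)) (p : Fin N × Fin N) :
    gtInterpGibbs a b t J p.1 p.2 = gibbsAverage (gtInterpH a b t J) (spinPair p) :=
  rfl

lemma integral_disorderMeasure (f : (Fin N × Fin N → ℝ) × (Fin N × Fin N → ℝ) → ℝ) :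
    ∫ J, f J ∂disorderMeasure N
      = ∫ K, f (MeasurableEquiv.sumPiEquivProdPi _ K) ∂Measure.pi fun _ => gaussianReal 0 1 :=
  ((measurePreserving_sumPiEquivProdPi fun _ => gaussianReal 0 1).integral_comp' f).symm

lemma hasDerivAt_gtCoeff (a b : Fin N → Fin N → ℝ) {s : ℝ} (hs : s ∈ Set.Ioo (0 : ℝ) 1)
    (k : (Fin N × Fin N) ⊕ (Fin N × Fin N)) :
    HasDerivAt (gtCoeff a b · k) (gtCoeffDeriv a b s k) s := by
  rcases k with p | p
  · exact ((hasDerivAt_sqrt hs.1.ne').mul_const (a p.1 p.2)).congr_deriv (by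
      simp only [gtCoeffDeriv, Sum.elim_inl]; ring)
  · exact ((((hasDerivAt_id' s).const_sub 1).sqrt (by linarith [hs.2])).mul_const
      (b p.1 p.2)).congr_deriv (by simp only [gtCoeffDeriv, Sum.elim_inr]; ring)

lemma abs_gtCoeffDeriv_le (a b : Fin N → Fin N → ℝ) {r s : ℝ} (hr : 0 < r)
    (hs : s ∈ Set.Icc r (1 - r)) (k : (Fin N × Fin N) ⊕ (Fin N × Fin N)) :
    |gtCoeffDeriv a b s k| ≤ |Sum.elim (fun p => a p.1 p.2) (fun p => b p.1 p.2) k| / (2 * √r) := by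
  have hr' : 0 < 2 * √r := by positivity
  rcases k with p | p
  · have hs' : 0 < 2 * √s := by have := sqrt_pos.2 (hr.trans_le hs.1); positivity
    rw [gtCoeffDeriv, Sum.elim_inl, Sum.elim_inl, abs_div, abs_of_pos hs']
    exact div_le_div_of_nonneg_left (abs_nonneg _) hr' (by gcongr; exact hs.1)
  · have hs' : 0 < 2 * √(1 - s) := by
      have := sqrt_pos.2 (hr.trans_le (le_sub_comm.1 hs.2)); positivity
    rw [gtCoeffDeriv, Sum.elim_inr, Sum.elim_inr, abs_neg, abs_div, abs_of_pos hs']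
    exact div_le_div_of_nonneg_left (abs_nonneg _) hr' (by gcongr; exact le_sub_comm.1 hs.2)

lemma sum_gtCoeffDeriv_mul_gtCoeff_mul (a b : Fin N → Fin N → ℝ) {s : ℝ}
    (hs : s ∈ Set.Ioo (0 : ℝ) 1) (x : Fin N × Fin N → ℝ) :
    ∑ k, gtCoeffDeriv a b s k * gtCoeff a b s k * Sum.elim x x k
      = 1 / 2 * (∑ p, a p.1 p.2 ^ 2 * x p - ∑ p, b p.1 p.2 ^ 2 * x p) := by
  have h0 : √s ≠ 0 := (sqrt_pos.2 hs.1).ne'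
  have h1 : √(1 - s) ≠ 0 := (sqrt_pos.2 (sub_pos.2 hs.2)).ne'
  rw [Fintype.sum_sum_type, mul_sub, Finset.mul_sum, Finset.mul_sum, sub_eq_add_neg,
    ← Finset.sum_neg_distrib]
  congr 1 <;> refine Finset.sum_congr rfl fun p _ => ?_ <;>
    simp only [gtCoeffDeriv, gtCoeff, Sum.elim_inl, Sum.elim_inr] <;> field_simp

end GuerraToninelli

theorem guerra_toninelli_interpolation_deriv_general (N : ℕ) (a b : Fin N → Fin N → ℝ)
    (t : ℝ) (ht : t ∈ Set.Ioo (0 : ℝ) 1) :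
    HasDerivAt (fun s => ∫ J,
        Real.log (∑ σ : Fin N → Bool, Real.exp (gtInterpH a b s J σ))
        ∂(disorderMeasure N))
      ((1 / 2) * ∫ J,
        ((∑ p : Fin N × Fin N,
            (a p.1 p.2) ^ 2 * (1 - (gtInterpGibbs a b t J p.1 p.2) ^ 2))
          - ∑ p : Fin N × Fin N,
            (b p.1 p.2) ^ 2 * (1 - (gtInterpGibbs a b t J p.1 p.2) ^ 2))
        ∂(disorderMeasure N)) t := by
  obtain ⟨r, hr, hrt, hrt'⟩ : ∃ r : ℝ, 0 < r ∧ r < t ∧ t < 1 - r :=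
    ⟨min t (1 - t) / 2, by have := lt_min ht.1 (sub_pos.2 ht.2); positivity,
      by linarith [min_le_left t (1 - t), ht.1], by linarith [min_le_right t (1 - t), ht.2]⟩
  have hU : ∀ s ∈ Ioo r (1 - r), s ∈ Ioo (0 : ℝ) 1 := fun s hs =>
    ⟨hr.trans hs.1, hs.2.trans (by linarith)⟩
  have h := hasDerivAt_integral_logPartition_linearHamiltonian (Sum.elim spinPair spinPair)
    (Ioo_mem_nhds hrt hrt') (fun s hs => hasDerivAt_gtCoeff a b (hU s hs))
    (fun s hs => abs_gtCoeffDeriv_le a b hr (Ioo_subset_Icc_self hs))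
  simp only [integral_disorderMeasure, gtInterpH_sumPiEquivProdPi]
  refine h.congr_deriv ?_
  rw [← integral_const_mul]
  congr 1
  funext K
  refine (Finset.sum_congr rfl fun k _ => ?_).trans (sum_gtCoeffDeriv_mul_gtCoeff_mul a b ht
    fun p => 1 - gtInterpGibbs a b t (MeasurableEquiv.sumPiEquivProdPi _ K) p.1 p.2 ^ 2)
  rcases k with p | p <;> simp only [Sum.elim_inl, Sum.elim_inr, gibbsCovariance_spinPair_self,
    gtInterpGibbs_eq_gibbsAverage, gtInterpH_sumPiEquivProdPi]

/-- Guerra–Toninelli interpolation derivative formula. For nonnegative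
coefficients `a_{ij}`, `b_{ij}` and independent standard Gaussians `J, J'`, the function
`t ↦ E[log Tr exp(√t Σ a_{ij} J_{ij} σ_iσ_j + √(1-t) Σ b_{ij} J'_{ij} σ_iσ_j)]` is
differentiable on `(0,1)` with derivative
`(1/2) E[Σ a_{ij}² (1 - ⟨σ_iσ_j⟩²) - Σ b_{ij}² (1 - ⟨σ_iσ_j⟩²)]`. -/
theorem guerra_toninelli_interpolation_deriv (N : ℕ) (a b : Fin N → Fin N → ℝ)
    (ha : ∀ i j, 0 ≤ a i j) (hb : ∀ i j, 0 ≤ b i j)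
    (t : ℝ) (ht : t ∈ Set.Ioo (0 : ℝ) 1) :
    HasDerivAt (fun s => ∫ J,
        Real.log (∑ σ : Fin N → Bool, Real.exp (gtInterpH a b s J σ))
        ∂(disorderMeasure N))
      ((1 / 2) * ∫ J,
        ((∑ p : Fin N × Fin N,
            (a p.1 p.2) ^ 2 * (1 - (gtInterpGibbs a b t J p.1 p.2) ^ 2))
          - ∑ p : Fin N × Fin N,
            (b p.1 p.2) ^ 2 * (1 - (gtInterpGibbs a b t J p.1 p.2) ^ 2))
        ∂(disorderMeasure N)) t :=
  guerra_toninelli_interpolation_deriv_general N a b t ht
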